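/- Let G be a finite connected undirected weighted graph and fix a clustering with centers such that each node u has d_u = dist(u, c_u) ≤ R. Let π be a shortest path in G between two cluster centers of total weight w_π, and suppose the nodes of π belong to at most k distinct clusters. Then in the quotient graph G_C (edge between clusters of u,v with weight w(u,v)+d_u+d_v for each G-edge crossing clusters), the clusters of the two endpoints of π are connected by a path of total weight at most w_π + 2Rk. -/

import Mathlib

/-- `l` is a walk from `u` to `v` in the graph with edge relation `E`. -/
def WalkFrom {V : Type*} (E : V → V → Prop) (u v : V) (l : List V) : Prop :=
  l ≠ [] ∧ l.Chain' E ∧ l.head? = some u ∧ l.getLast? = some v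

/-- total weight of a walk given by the list of its vertices -/
def wgt {V : Type*} (w : V → V → ℝ) (l : List V) : ℝ :=
  ((l.zip l.tail).map fun p => w p.1 p.2).sum

/-- weighted shortest-path distance -/
noncomputable def gdist {V : Type*} (E : V → V → Prop) (w : V → V → ℝ) (u v : V) : ℝ :=
  sInf {x | ∃ l, WalkFrom E u v l ∧ wgt w l = x}

/-- edge relation of the quotient graph -/
def EC {V : Type*} {τ : ℕ} (E : V → V → Prop) (cl : V → Fin τ) :
    Fin τ → Fin τ → Prop :=
  fun i j => i ≠ j ∧ ∃ u v, E u v ∧ cl u = i ∧ cl v = j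

/-- weight of a quotient edge: minimum over crossing edges `(u,v)` of
`w(u,v) + d_u + d_v` -/
noncomputable def wC {V : Type*} {τ : ℕ} (E : V → V → Prop) (w : V → V → ℝ)
    (cl : V → Fin τ) (ctr : Fin τ → V) : Fin τ → Fin τ → ℝ :=
  fun i j => sInf {x | ∃ u v, E u v ∧ cl u = i ∧ cl v = j ∧
    x = w u v + gdist E w u (ctr i) + gdist E w v (ctr j)}

/-! Cut the walk at the last vertex `u` lying in the cluster of its first vertex. The edge `u v`
leaving it gives a quotient edge of weight at most `w u v + 2R`, and the rest of the walk never
returns to that cluster, so by induction every cluster met by the walk is paid for at most once. -/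

theorem List.exists_last_split {α : Type*} {p : α → Prop} :
    ∀ {l : List α}, (∃ x ∈ l, p x) → ∃ l₁ u l₂, l = l₁ ++ u :: l₂ ∧ p u ∧ ∀ x ∈ l₂, ¬ p x
  | a :: t, h => by
    by_cases ht : ∃ x ∈ t, p x
    · obtain ⟨l₁, u, l₂, rfl, hu, hl₂⟩ := List.exists_last_split ht
      exact ⟨a :: l₁, u, l₂, rfl, hu, hl₂⟩
    · obtain ⟨x, hx, hpx⟩ := h
      obtain rfl | hx := List.mem_cons.mp hx
      · exact ⟨[], x, t, rfl, hpx, fun y hy hpy => ht ⟨y, hy, hpy⟩⟩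
      · exact absurd ⟨x, hx, hpx⟩ ht

theorem List.card_toFinset_map_lt {α β : Type*} [DecidableEq β] {f : α → β}
    {l m : List α} (hml : m ⊆ l) {x : α} (hx : x ∈ l) (hfresh : ∀ y ∈ m, f y ≠ f x) :
    (m.map f).toFinset.card < (l.map f).toFinset.card := by
  refine Finset.card_lt_card (Finset.ssubset_iff_of_subset ?_ |>.mpr ⟨f x, ?_, ?_⟩)
  · intro b
    simp only [List.mem_toFinset, List.mem_map]
    exact fun ⟨y, hy, hb⟩ => ⟨y, hml hy, hb⟩
  · simpa using ⟨x, hx, rfl⟩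
  · simpa using hfresh

section QuotientWalk

variable {V : Type*} {E : V → V → Prop} {w : V → V → ℝ}

theorem WalkFrom.singleton (a : V) : WalkFrom E a a [a] :=
  ⟨List.cons_ne_nil _ _, List.isChain_singleton _, rfl, rfl⟩

theorem WalkFrom.cons {a b c : V} {l : List V} (hab : E a b) (hl : WalkFrom E b c l) :
    WalkFrom E a c (a :: l) := by
  obtain ⟨hne, hch, hhead, hlast⟩ := hl
  obtain ⟨b', t, rfl⟩ := List.exists_cons_of_ne_nil hne
  obtain rfl : b' = b := by simpa using hhead
  exact ⟨List.cons_ne_nil _ _, List.isChain_cons_cons.mpr ⟨hab, hch⟩, rfl, by simpa using hlast⟩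

theorem WalkFrom.suffix {a b v : V} {l t : List V} (hl : WalkFrom E a b l)
    (hsuff : v :: t <:+ l) : WalkFrom E v b (v :: t) := by
  obtain ⟨s, rfl⟩ := hsuff
  exact ⟨List.cons_ne_nil _ _, hl.2.1.right_of_append, rfl, by simpa using hl.2.2.2⟩

theorem wgt_cons_cons (a b : V) (t : List V) :
    wgt w (a :: b :: t) = w a b + wgt w (b :: t) := by
  simp [wgt]

theorem wgt_cons_of_walkFrom {a b c : V} {l : List V} (hl : WalkFrom E b c l) :
    wgt w (a :: l) = w a b + wgt w l := by
  obtain ⟨hne, -, hhead, -⟩ := hl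
  obtain ⟨b', t, rfl⟩ := List.exists_cons_of_ne_nil hne
  obtain rfl : b' = b := by simpa using hhead
  exact wgt_cons_cons a b' t

variable (hw : ∀ u v, E u v → 0 ≤ w u v)
include hw

theorem wgt_nonneg : ∀ {l : List V}, l.IsChain E → 0 ≤ wgt w l
  | [], _ | [_], _ => by simp [wgt]
  | a :: b :: t, h => by
    obtain ⟨hab, ht⟩ := List.isChain_cons_cons.mp h
    rw [wgt_cons_cons]
    exact add_nonneg (hw a b hab) (wgt_nonneg ht)

theorem wgt_le_wgt_append :
    ∀ {l₁ l₂ : List V}, (l₁ ++ l₂).IsChain E → wgt w l₂ ≤ wgt w (l₁ ++ l₂)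
  | [], _, _ => le_rfl
  | [a], [], _ => by simp [wgt]
  | [a], b :: t, h => by
    rw [List.singleton_append, wgt_cons_cons]
    exact le_add_of_nonneg_left (hw a b (List.isChain_cons_cons.mp h).1)
  | a :: b :: l₁, l₂, h => by
    obtain ⟨hab, ht⟩ := List.isChain_cons_cons.mp h
    rw [List.cons_append, List.cons_append, wgt_cons_cons, ← List.cons_append]
    exact le_add_of_nonneg_of_le (hw a b hab) (wgt_le_wgt_append ht)

theorem gdist_nonneg (u v : V) : 0 ≤ gdist E w u v :=
  Real.sInf_nonneg fun _ ⟨_, ⟨_, hch, _⟩, hx⟩ => hx ▸ wgt_nonneg hw hch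

variable {τ : ℕ} (cl : V → Fin τ) (ctr : Fin τ → V)

theorem wC_le {u v : V} (huv : E u v) :
    wC E w cl ctr (cl u) (cl v) ≤
      w u v + gdist E w u (ctr (cl u)) + gdist E w v (ctr (cl v)) := by
  refine csInf_le ⟨0, ?_⟩ ⟨u, v, huv, rfl, rfl, rfl⟩
  rintro _ ⟨u', v', huv', -, -, rfl⟩
  exact add_nonneg (add_nonneg (hw u' v' huv') (gdist_nonneg hw _ _)) (gdist_nonneg hw _ _)

theorem exists_quotient_walk {R : ℝ} (hR : ∀ u, gdist E w u (ctr (cl u)) ≤ R) {a b : V}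
    (l : List V) (hl : WalkFrom E a b l) :
    ∃ L, WalkFrom (EC E cl) (cl a) (cl b) L ∧
      wgt (wC E w cl ctr) L ≤ wgt w l + 2 * R * (l.map cl).toFinset.card := by
  have hR0 : 0 ≤ R := (gdist_nonneg hw a _).trans (hR a)
  obtain ⟨hne, hch, hhead, hlast⟩ := hl
  obtain ⟨l₁, u, l₂, rfl, hu, hfresh⟩ :=
    List.exists_last_split (p := fun x => cl x = cl a) ⟨a, List.mem_of_mem_head? hhead, rfl⟩
  cases l₂ with
  | nil =>
    obtain rfl : u = b := by simpa using hlast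
    refine ⟨[cl a], hu ▸ WalkFrom.singleton _, ?_⟩
    have := wgt_nonneg hw hch
    simp only [wgt, List.tail_cons, List.zip_nil_right, List.map_nil, List.sum_nil]
    positivity
  | cons v t =>
    have hvt : WalkFrom E v b (v :: t) :=
      WalkFrom.suffix ⟨hne, hch, hhead, hlast⟩ ⟨l₁ ++ [u], by simp⟩
    obtain ⟨L, hL, hLw⟩ := exists_quotient_walk hR (v :: t) hvt
    have huv : E u v := (List.isChain_cons_cons.mp hch.right_of_append).1
    have hjump : EC E cl (cl a) (cl v) := ⟨(hfresh v (by simp)) ∘ Eq.symm, u, v, huv, hu, rfl⟩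
    have hcard :
        ((v :: t).map cl).toFinset.card + 1 ≤ ((l₁ ++ u :: v :: t).map cl).toFinset.card :=
      List.card_toFinset_map_lt (fun x hx => by simp [hx]) (List.mem_of_mem_head? hhead) hfresh
    refine ⟨cl a :: L, WalkFrom.cons hjump hL, ?_⟩
    calc wgt (wC E w cl ctr) (cl a :: L)
        = wC E w cl ctr (cl u) (cl v) + wgt (wC E w cl ctr) L := by
          rw [wgt_cons_of_walkFrom hL, hu]
      _ ≤ (w u v + 2 * R) + (wgt w (v :: t) + 2 * R * ((v :: t).map cl).toFinset.card) := by
        gcongr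
        · linarith [wC_le hw cl ctr huv, hR u, hR v]
      _ = wgt w (u :: v :: t) + 2 * R * (((v :: t).map cl).toFinset.card + 1) := by
        rw [wgt_cons_cons]; ring
      _ ≤ wgt w (l₁ ++ u :: v :: t) + 2 * R * ((l₁ ++ u :: v :: t).map cl).toFinset.card := by
        gcongr
        · exact wgt_le_wgt_append hw hch
        · exact_mod_cast hcard
termination_by l.length
decreasing_by subst_vars; simp; omega

end QuotientWalk

theorem stmt16_general {V : Type*}
    (E : V → V → Prop) (w : V → V → ℝ)
    (hpos : ∀ u v, E u v → 0 < w u v)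
    (τ : ℕ) (cl : V → Fin τ) (ctr : Fin τ → V)
    (hctr : ∀ i, cl (ctr i) = i)
    (R : ℝ) (hR : ∀ u, gdist E w u (ctr (cl u)) ≤ R)
    (i j : Fin τ) (l : List V)
    (hl : WalkFrom E (ctr i) (ctr j) l)
    (k : ℕ) (hk : (l.map cl).toFinset.card ≤ k) :
    ∃ L : List (Fin τ), WalkFrom (EC E cl) i j L ∧
      wgt (wC E w cl ctr) L ≤ wgt w l + 2 * R * k := by
  have hw : ∀ u v, E u v → 0 ≤ w u v := fun u v huv => (hpos u v huv).le
  obtain ⟨L, hL, hLw⟩ := exists_quotient_walk hw cl ctr hR l hl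
  rw [hctr, hctr] at hL
  have hR0 : 0 ≤ R := (gdist_nonneg hw (ctr i) _).trans (hR _)
  refine ⟨L, hL, hLw.trans ?_⟩
  gcongr

/-- If a shortest path `π` of weight `w_π` between two cluster centers meets at
most `k` distinct clusters, then the corresponding clusters are joined in the
quotient graph by a path of weight at most `w_π + 2Rk`. -/
theorem stmt16 {V : Type*} [Fintype V] [DecidableEq V]
    (E : V → V → Prop) (w : V → V → ℝ)
    (hsym : ∀ u v, E u v → E v u) (hwsym : ∀ u v, w u v = w v u)
    (hpos : ∀ u v, E u v → 0 < w u v)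
    (hconn : ∀ u v : V, ∃ l, WalkFrom E u v l)
    (τ : ℕ) (cl : V → Fin τ) (ctr : Fin τ → V)
    (hctr : ∀ i, cl (ctr i) = i)
    (R : ℝ) (hR : ∀ u, gdist E w u (ctr (cl u)) ≤ R)
    (i j : Fin τ) (l : List V)
    (hl : WalkFrom E (ctr i) (ctr j) l)
    (hshort : wgt w l = gdist E w (ctr i) (ctr j))
    (k : ℕ) (hk : (l.map cl).toFinset.card ≤ k) :
    ∃ L : List (Fin τ), WalkFrom (EC E cl) i j L ∧
      wgt (wC E w cl ctr) L ≤ wgt w l + 2 * R * k :=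
  stmt16_general E w hpos τ cl ctr hctr R hR i j l hl k hk
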